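/- For every n ≥ 6, the number of Ulam words of length n is at least 2n + 4. -/

import Mathlib

/-!
Complementing every letter preserves Ulam words, so it suffices to find `n + 2` Ulam words of
length `n` with fewer ones than zeros. In a word `0^a c 0^b` (`padZeros a c b`) an all-zero Ulam
factor can only be `0`, so every Ulam split either peels a single `0` off one end or cuts the
core `c`. This turns Ulam-ness of the following families into parity recursions in `a` and `b`:
`0^a 1 0^b` is Ulam iff `C(a + b, a)` is odd (Pascal's rule mod 2), `0^a 11 0^b` iff `a + b` is
odd, `0^a 101 0^b` iff `a + b` is odd and at least `3`, and `0^b 11001` is Ulam for even `b`.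
For even `n` take `0^a 1 0^(n-1-a)` with `a ∈ {0, 1, n-2, n-1}` and the `n - 2` words
`0^a 101 0^(n-3-a)`; for odd `n` take `10^(n-1)`, `0^(n-1)1`, the `n - 1` words
`0^a 11 0^(n-2-a)` and `0^(n-5) 11001`.
-/

/-- Ulam words with fuel bounding the recursion depth (fuel ≥ length suffices). -/
def UlamN : ℕ → List Bool → Prop
  | 0, _ => False
  | n + 1, w =>
    w = [false] ∨ w = [true] ∨
      ∃! p : List Bool × List Bool,
        p.1 ≠ [] ∧ p.2 ≠ [] ∧ UlamN n p.1 ∧ UlamN n p.2 ∧ p.1 ≠ p.2 ∧ p.1 ++ p.2 = w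

/-- A word over {0,1} (`false` = 0, `true` = 1) is Ulam. -/
def IsUlam (w : List Bool) : Prop := UlamN w.length w

/-- The integer whose binary representation (most significant digit first) is `w`. -/
def binVal (w : List Bool) : ℕ := w.foldl (fun acc b => 2 * acc + b.toNat) 0

open List

theorem not_ulamN_nil (n : ℕ) : ¬ UlamN n [] := by
  cases n with
  | zero => exact id
  | succ n => rintro (h | h | ⟨p, ⟨h₁, -, -, -, -, h⟩, -⟩) <;> simp_all

theorem ulamN_congr {m n : ℕ} {w : List Bool} (hm : w.length ≤ m) (hn : w.length ≤ n) :
    UlamN m w ↔ UlamN n w := by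
  induction m generalizing n w with
  | zero => simp_all [not_ulamN_nil]
  | succ m ih =>
    cases n with
    | zero => simp_all [not_ulamN_nil]
    | succ n =>
      refine or_congr_right (or_congr_right (existsUnique_congr fun ⟨u, v⟩ => ?_))
      refine and_congr_right fun (hu : u ≠ []) => and_congr_right fun (hv : v ≠ []) => ?_
      suffices u ++ v = w → ((UlamN m u ↔ UlamN n u) ∧ (UlamN m v ↔ UlamN n v)) from
        ⟨fun ⟨h₁, h₂, hne, h⟩ => ⟨(this h).1.1 h₁, (this h).2.1 h₂, hne, h⟩,
          fun ⟨h₁, h₂, hne, h⟩ => ⟨(this h).1.2 h₁, (this h).2.2 h₂, hne, h⟩⟩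
      rintro rfl
      simp only [length_append] at hm hn
      have := length_pos_iff.2 hu
      have := length_pos_iff.2 hv
      exact ⟨ih (by omega) (by omega), ih (by omega) (by omega)⟩

theorem IsUlam.ne_nil {w : List Bool} (h : IsUlam w) : w ≠ [] := by
  rintro rfl
  exact h

theorem isUlam_singleton (x : Bool) : IsUlam [x] := by
  cases x
  exacts [Or.inl rfl, Or.inr (Or.inl rfl)]

structure IsUlamSplit (w u v : List Bool) : Prop where
  left : IsUlam u
  right : IsUlam v
  ne : u ≠ v
  append_eq : u ++ v = w

theorem isUlamSplit_iff_of_append_eq {w u v : List Bool} (h : u ++ v = w) :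
    IsUlamSplit w u v ↔ IsUlam u ∧ IsUlam v ∧ u ≠ v :=
  ⟨fun hs => ⟨hs.left, hs.right, hs.ne⟩, fun hs => ⟨hs.1, hs.2.1, hs.2.2, h⟩⟩

theorem IsUlamSplit.length_lt_left {w u v : List Bool} (h : IsUlamSplit w u v) :
    u.length < w.length := by
  rw [← h.append_eq, length_append]
  exact Nat.lt_add_of_pos_right (length_pos_iff.2 h.right.ne_nil)

theorem IsUlamSplit.length_lt_right {w u v : List Bool} (h : IsUlamSplit w u v) :
    v.length < w.length := by
  rw [← h.append_eq, length_append]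
  exact Nat.lt_add_of_pos_left (length_pos_iff.2 h.left.ne_nil)

theorem isUlam_iff_existsUnique_split {w : List Bool} (hw : 2 ≤ w.length) :
    IsUlam w ↔ ∃! p : List Bool × List Bool, IsUlamSplit w p.1 p.2 := by
  obtain ⟨k, hk⟩ : ∃ k, w.length = k + 1 := ⟨w.length - 1, by omega⟩
  have hsingle : ∀ x, w ≠ [x] := by
    rintro x rfl
    simp at hw
  rw [IsUlam, hk, UlamN]
  simp only [hsingle, false_or]
  refine existsUnique_congr fun ⟨u, v⟩ => ⟨fun ⟨hu, hv, hu', hv', hne, happ⟩ => ?_, fun hs => ?_⟩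
  · have hlen := congrArg length happ
    have := length_pos_iff.2 hu
    have := length_pos_iff.2 hv
    rw [length_append] at hlen
    exact ⟨(ulamN_congr (by omega) le_rfl).1 hu', (ulamN_congr (by omega) le_rfl).1 hv', hne, happ⟩
  · have := hs.length_lt_left
    have := hs.length_lt_right
    exact ⟨hs.left.ne_nil, hs.right.ne_nil, (ulamN_congr (by omega) le_rfl).2 hs.left,
      (ulamN_congr (by omega) le_rfl).2 hs.right, hs.ne, hs.append_eq⟩

theorem IsUlamSplit.two_le_length {w u v : List Bool} (h : IsUlamSplit w u v) : 2 ≤ w.length := by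
  have := h.length_lt_left
  have := length_pos_iff.2 h.left.ne_nil
  omega

theorem isUlam_of_unique_split {w u v : List Bool} (h : IsUlamSplit w u v)
    (huniq : ∀ u' v', IsUlamSplit w u' v' → u' = u) : IsUlam w :=
  (isUlam_iff_existsUnique_split h.two_le_length).2
    ⟨(u, v), h, fun ⟨u', v'⟩ hp => by
      obtain rfl := huniq u' v' hp
      rw [show v' = v from append_cancel_left (hp.append_eq.trans h.append_eq.symm)]⟩

theorem IsUlam.left_eq_of_split {w u v u' v' : List Bool} (hw : IsUlam w)
    (h : IsUlamSplit w u v) (h' : IsUlamSplit w u' v') : u = u' := by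
  obtain ⟨_, -, huniq⟩ := (isUlam_iff_existsUnique_split h.two_le_length).1 hw
  exact (congrArg Prod.fst (huniq (u, v) h)).trans (congrArg Prod.fst (huniq (u', v') h')).symm

theorem IsUlam.exists_split {w : List Bool} (hw : IsUlam w) (hlen : 2 ≤ w.length) :
    ∃ u v, IsUlamSplit w u v := by
  obtain ⟨p, hp, -⟩ := (isUlam_iff_existsUnique_split hlen).1 hw
  exact ⟨p.1, p.2, hp⟩

theorem IsUlamSplit.of_append_eq {w u v v' : List Bool} (h : IsUlamSplit w u v)
    (h' : u ++ v' = w) : IsUlamSplit w u v' := by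
  obtain rfl : v = v' := append_cancel_left (h.append_eq.trans h'.symm)
  exact h

theorem isUlam_iff_xor {w u₁ v₁ u₂ v₂ : List Bool} (hw : 2 ≤ w.length) (h₁ : u₁ ++ v₁ = w)
    (h₂ : u₂ ++ v₂ = w) (hne : u₁ ≠ u₂) (hsplits : ∀ u v, IsUlamSplit w u v → u = u₁ ∨ u = u₂) :
    IsUlam w ↔ Xor (IsUlamSplit w u₁ v₁) (IsUlamSplit w u₂ v₂) := by
  constructor
  · intro hw'
    obtain ⟨u, v, hs⟩ := hw'.exists_split hw
    rcases hsplits u v hs with rfl | rfl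
    · exact Or.inl ⟨hs.of_append_eq h₁, fun hs₂ => hne (hw'.left_eq_of_split hs hs₂)⟩
    · exact Or.inr ⟨hs.of_append_eq h₂, fun hs₁ => hne (hw'.left_eq_of_split hs₁ hs)⟩
  · rintro (⟨hs, hns⟩ | ⟨hs, hns⟩)
    · refine isUlam_of_unique_split hs fun u v hs' => (hsplits u v hs').resolve_right ?_
      rintro rfl
      exact hns (hs'.of_append_eq h₂)
    · refine isUlam_of_unique_split hs fun u v hs' => (hsplits u v hs').resolve_left ?_
      rintro rfl
      exact hns (hs'.of_append_eq h₁)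

theorem IsUlam.map_not {w : List Bool} (hw : IsUlam w) : IsUlam (w.map not) := by
  induction hn : w.length using Nat.strong_induction_on generalizing w with
  | _ n ih =>
  have map_split : ∀ {x u v}, x.length = n → IsUlamSplit x u v →
      IsUlamSplit (x.map not) (u.map not) (v.map not) := fun hx hs =>
    ⟨ih _ (hx ▸ hs.length_lt_left) hs.left rfl, ih _ (hx ▸ hs.length_lt_right) hs.right rfl,
      (map_injective_iff.2 Bool.not_injective).ne hs.ne, by rw [← map_append, hs.append_eq]⟩
  rcases Nat.lt_or_ge n 2 with hlt | hge
  · obtain ⟨x, rfl⟩ : ∃ x, w = [x] := length_eq_one_iff.1 (by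
      have := length_pos_iff.2 hw.ne_nil
      omega)
    exact isUlam_singleton _
  · obtain ⟨u, v, hs⟩ := hw.exists_split (hn ▸ hge)
    refine isUlam_of_unique_split (map_split hn hs) fun u' v' hs' => ?_
    have := hw.left_eq_of_split hs (by simpa [Function.comp_def] using map_split (by simpa) hs')
    simp [this, Function.comp_def]

theorem isUlam_replicate_iff {k : ℕ} {x : Bool} : IsUlam (replicate k x) ↔ k = 1 := by
  refine ⟨fun hk => ?_, by rintro rfl; exact isUlam_singleton x⟩
  induction k using Nat.strong_induction_on with
  | _ k ih =>
  by_contra hne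
  have : k ≠ 0 := by
    rintro rfl
    exact hk.ne_nil rfl
  obtain ⟨u, v, hs⟩ := hk.exists_split (by simp; omega)
  obtain ⟨hlen, hu, hv⟩ := append_eq_replicate_iff.1 hs.append_eq
  have := length_pos_iff.2 hs.left.ne_nil
  have := length_pos_iff.2 hs.right.ne_nil
  have hu1 := ih u.length (by omega) (hu ▸ hs.left)
  have hv1 := ih v.length (by omega) (hv ▸ hs.right)
  exact hs.ne (by rw [hu, hv, hu1, hv1])

def padZeros (a : ℕ) (c : List Bool) (b : ℕ) : List Bool :=
  replicate a false ++ c ++ replicate b false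

theorem length_padZeros (a : ℕ) (c : List Bool) (b : ℕ) :
    (padZeros a c b).length = a + c.length + b := by
  simp [padZeros, add_assoc]

theorem idxOf_true_padZeros (a : ℕ) (c : List Bool) (b : ℕ) :
    (padZeros a (true :: c) b).idxOf true = a := by
  simp [padZeros, idxOf_append_of_notMem]

theorem IsUlamSplit.cases_padZeros {a b : ℕ} {c u v : List Bool}
    (h : IsUlamSplit (padZeros a c b) u v) :
    (∃ a', a = a' + 1 ∧ u = [false] ∧ v = padZeros a' c b) ∨
    (∃ b', b = b' + 1 ∧ u = padZeros a c b' ∧ v = [false]) ∨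
    ∃ k, 0 < k ∧ k < c.length ∧ u = padZeros a (c.take k) 0 ∧ v = padZeros 0 (c.drop k) b := by
  have hu : u = (padZeros a c b).take u.length := by
    rw [← h.append_eq]; simp
  have hv : v = (padZeros a c b).drop u.length := by
    rw [← h.append_eq]; simp
  have hpos := length_pos_iff.2 h.left.ne_nil
  have hlt := h.length_lt_left
  rw [length_padZeros] at hlt
  unfold padZeros at hu hv ⊢
  rcases le_or_gt u.length a with hle | hgt
  · have hu' : u = replicate u.length false := by
      rw [hu]; simp [take_append, take_replicate, Nat.sub_eq_zero_of_le hle, hle]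
    have hu1 := isUlam_replicate_iff.1 (hu' ▸ h.left)
    obtain ⟨i, rfl⟩ : ∃ i, a = i + 1 := ⟨a - 1, by omega⟩
    refine Or.inl ⟨i, rfl, by rw [hu', hu1]; rfl, ?_⟩
    rw [hv, hu1, replicate_succ]
    simp
  rcases lt_or_ge u.length (a + c.length) with hlt' | hge
  · obtain ⟨k, hk⟩ : ∃ k, u.length = (replicate a false).length + k :=
      ⟨u.length - a, by simp; omega⟩
    have hkc : k < c.length := by simp at hk; omega
    refine Or.inr (Or.inr ⟨k, by simp at hk; omega, hkc, ?_, ?_⟩)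
    · rw [hu, hk, append_assoc, take_length_add_append, take_append_of_le_length hkc.le]
      simp
    · rw [hv, hk, append_assoc, drop_length_add_append, drop_append_of_le_length hkc.le]
      simp
  · obtain ⟨j, hj⟩ : ∃ j, u.length = (replicate a false ++ c).length + j :=
      ⟨u.length - (a + c.length), by simp; omega⟩
    have hv' : v = replicate (b - j) false := by
      rw [hv, hj, drop_length_add_append, drop_replicate]
    have hv1 := isUlam_replicate_iff.1 (hv' ▸ h.right)
    refine Or.inr (Or.inl ⟨j, by omega, ?_, by rw [hv', hv1]; rfl⟩)
    rw [hu, hj, take_length_add_append, take_replicate, min_eq_left (by omega)]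

theorem isUlamSplit_padZeros_succ_left_iff {a b : ℕ} {c : List Bool} (hc : true ∈ c) :
    IsUlamSplit (padZeros (a + 1) c b) [false] (padZeros a c b) ↔ IsUlam (padZeros a c b) := by
  rw [isUlamSplit_iff_of_append_eq (by simp [padZeros, replicate_succ])]
  refine ⟨fun hs => hs.2.1, fun hs => ⟨isUlam_singleton false, hs, fun h => ?_⟩⟩
  have : true ∈ padZeros a c b := by simp [padZeros, hc]
  simp [← h] at this

theorem isUlamSplit_padZeros_succ_right_iff {a b : ℕ} {c : List Bool} (hc : true ∈ c) :
    IsUlamSplit (padZeros a c (b + 1)) (padZeros a c b) [false] ↔ IsUlam (padZeros a c b) := by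
  rw [isUlamSplit_iff_of_append_eq (by simp [padZeros, replicate_succ'])]
  refine ⟨fun hs => hs.1, fun hs => ⟨hs, isUlam_singleton false, fun h => ?_⟩⟩
  have : true ∈ padZeros a c b := by simp [padZeros, hc]
  simp [h] at this

theorem isUlam_padZeros_true_iff (a b : ℕ) :
    IsUlam (padZeros a [true] b) ↔ Odd ((a + b).choose a) :=
  match a, b with
  | 0, 0 => by simpa [padZeros] using isUlam_singleton true
  | a + 1, 0 => by
    simp only [add_zero, Nat.choose_self, odd_one, iff_true]
    refine isUlam_of_unique_split ((isUlamSplit_padZeros_succ_left_iff (by simp)).2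
      ((isUlam_padZeros_true_iff a 0).2 (by simp))) fun u v hs => ?_
    rcases hs.cases_padZeros with ⟨_, _, rfl, -⟩ | ⟨_, h, -⟩ | ⟨k, hk, hk', -⟩
    · rfl
    · omega
    · simp at hk'; omega
  | 0, b + 1 => by
    simp only [zero_add, Nat.choose_zero_right, odd_one, iff_true]
    refine isUlam_of_unique_split ((isUlamSplit_padZeros_succ_right_iff (by simp)).2
      ((isUlam_padZeros_true_iff 0 b).2 (by simp))) fun u v hs => ?_
    rcases hs.cases_padZeros with ⟨_, h, -⟩ | ⟨b', hb, rfl, -⟩ | ⟨k, hk, hk', -⟩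
    · omega
    · obtain rfl : b = b' := by omega
      rfl
    · simp at hk'; omega
  | a + 1, b + 1 => by
    have pascal : (a + 1 + (b + 1)).choose (a + 1) =
        (a + (b + 1)).choose a + (a + 1 + b).choose (a + 1) := by
      rw [show a + 1 + (b + 1) = a + b + 1 + 1 by omega, show a + (b + 1) = a + b + 1 by omega,
        show a + 1 + b = a + b + 1 by omega]
      exact Nat.choose_succ_succ _ _
    rw [isUlam_iff_xor (u₁ := [false]) (v₁ := padZeros a [true] (b + 1))
      (u₂ := padZeros (a + 1) [true] b) (v₂ := [false]) (by simp [length_padZeros]; omega)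
      (by simp [padZeros, replicate_succ]) (by simp [padZeros, replicate_succ'])
      (fun h => by simpa [padZeros] using congrArg (count true) h) ?_,
      isUlamSplit_padZeros_succ_left_iff (by simp), isUlamSplit_padZeros_succ_right_iff (by simp),
      isUlam_padZeros_true_iff a (b + 1), isUlam_padZeros_true_iff (a + 1) b,
      xor_iff_iff_not, pascal, Nat.odd_add, Nat.not_odd_iff_even]
    intro u v hs
    rcases hs.cases_padZeros with ⟨_, _, rfl, -⟩ | ⟨b', hb, rfl, -⟩ | ⟨k, hk, hk', -⟩
    · exact Or.inl rfl
    · obtain rfl : b = b' := by omega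
      exact Or.inr rfl
    · simp at hk'; omega
termination_by a + b

theorem isUlam_padZeros_true_zero (a : ℕ) : IsUlam (padZeros a [true] 0) :=
  (isUlam_padZeros_true_iff a 0).2 (by simp)

theorem isUlam_zero_padZeros_true (b : ℕ) : IsUlam (padZeros 0 [true] b) :=
  (isUlam_padZeros_true_iff 0 b).2 (by simp)

theorem isUlam_one_padZeros_true_iff (b : ℕ) : IsUlam (padZeros 1 [true] b) ↔ Even b := by
  simp [isUlam_padZeros_true_iff, add_comm 1, Nat.odd_add_one]

theorem isUlam_padZeros_true_one_iff (a : ℕ) : IsUlam (padZeros a [true] 1) ↔ Even a := by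
  simp [isUlam_padZeros_true_iff, Nat.odd_add_one]

theorem isUlamSplit_padZeros_true_true_cut_one_iff (a b : ℕ) :
    IsUlamSplit (padZeros a [true, true] b) (padZeros a [true] 0) (padZeros 0 [true] b) ↔
      a + b ≠ 0 := by
  rw [isUlamSplit_iff_of_append_eq (by simp [padZeros]),
    and_iff_right (isUlam_padZeros_true_zero a),
    and_iff_right (isUlam_zero_padZeros_true b)]
  cases a <;> simp [padZeros, replicate_succ]

theorem IsUlamSplit.cases_padZeros_true_true {a b : ℕ} {u v : List Bool}
    (h : IsUlamSplit (padZeros a [true, true] b) u v) :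
    (∃ a', a = a' + 1 ∧ u = [false] ∧ IsUlam (padZeros a' [true, true] b)) ∨
    (∃ b', b = b' + 1 ∧ u = padZeros a [true, true] b' ∧ IsUlam (padZeros a [true, true] b')) ∨
    (u = padZeros a [true] 0 ∧ a + b ≠ 0) := by
  rcases h.cases_padZeros with ⟨a', rfl, rfl, rfl⟩ | ⟨b', rfl, rfl, rfl⟩ | ⟨k, hk, hk', rfl, rfl⟩
  · exact Or.inl ⟨a', rfl, rfl, h.right⟩
  · exact Or.inr (Or.inl ⟨b', rfl, rfl, h.left⟩)
  · obtain rfl : k = 1 := by simp at hk'; omega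
    exact Or.inr (Or.inr ⟨rfl, (isUlamSplit_padZeros_true_true_cut_one_iff a b).1 h⟩)

theorem isUlam_padZeros_true_true_iff (a b : ℕ) :
    IsUlam (padZeros a [true, true] b) ↔ Odd (a + b) := by
  have core := isUlamSplit_padZeros_true_true_cut_one_iff a b
  constructor
  · intro hw
    obtain ⟨u, v, hs⟩ := hw.exists_split (by simp [length_padZeros]; omega)
    rcases hs.cases_padZeros_true_true with ⟨a', rfl, rfl, -⟩ | ⟨b', rfl, rfl, -⟩ | ⟨rfl, hs0⟩
    · have := hw.left_eq_of_split hs (core.2 (by omega))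
      simp [padZeros, replicate_succ] at this
    · have := hw.left_eq_of_split hs (core.2 (by omega))
      simp [padZeros] at this
    · by_contra hodd
      rw [Nat.not_odd_iff_even] at hodd
      rcases eq_or_ne a 0 with rfl | ha
      · obtain ⟨b', rfl⟩ := Nat.exists_eq_add_one_of_ne_zero (by simpa using hs0)
        have := hw.left_eq_of_split hs ((isUlamSplit_padZeros_succ_right_iff (by simp)).2
            ((isUlam_padZeros_true_true_iff 0 b').2 (by simpa [Nat.even_add_one] using hodd)))
        simp [padZeros] at this
      · obtain ⟨a', rfl⟩ := Nat.exists_eq_add_one_of_ne_zero ha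
        have := hw.left_eq_of_split hs ((isUlamSplit_padZeros_succ_left_iff (by simp)).2
            ((isUlam_padZeros_true_true_iff a' b).2
              (by simpa [add_right_comm, Nat.even_add_one] using hodd)))
        simp [padZeros, replicate_succ] at this
  · intro hodd
    refine isUlam_of_unique_split (core.2 (by rintro h; simp [h] at hodd)) fun u v hs => ?_
    rcases hs.cases_padZeros_true_true with ⟨a', rfl, -, h⟩ | ⟨b', rfl, -, h⟩ | ⟨hu, -⟩
    · have := Nat.odd_iff.1 ((isUlam_padZeros_true_true_iff a' b).1 h)
      simp only [Nat.odd_iff] at hodd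
      omega
    · have := Nat.odd_iff.1 ((isUlam_padZeros_true_true_iff a b').1 h)
      simp only [Nat.odd_iff] at hodd
      omega
    · exact hu
termination_by a + b

theorem isUlamSplit_padZeros_true_false_true_cut_one_iff (a b : ℕ) :
    IsUlamSplit (padZeros a [true, false, true] b) (padZeros a [true] 0) (padZeros 1 [true] b) ↔
      Even b ∧ ¬(a = 1 ∧ b = 0) := by
  rw [isUlamSplit_iff_of_append_eq (by simp [padZeros]),
    and_iff_right (isUlam_padZeros_true_zero a),
    isUlam_one_padZeros_true_iff]
  rcases a with _ | _ | a <;> simp [padZeros, replicate_succ]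

theorem isUlamSplit_padZeros_true_false_true_cut_two_iff (a b : ℕ) :
    IsUlamSplit (padZeros a [true, false, true] b) (padZeros a [true] 1) (padZeros 0 [true] b) ↔
      Even a ∧ ¬(a = 0 ∧ b = 1) := by
  rw [isUlamSplit_iff_of_append_eq (by simp [padZeros]), isUlam_padZeros_true_one_iff]
  simp only [isUlam_zero_padZeros_true, true_and]
  rcases a with _ | a <;> rcases b with _ | _ | b <;> simp [padZeros, replicate_succ]

theorem IsUlamSplit.cases_padZeros_true_false_true {a b : ℕ} {u v : List Bool}
    (h : IsUlamSplit (padZeros a [true, false, true] b) u v) :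
    (∃ a', a = a' + 1 ∧ u = [false] ∧ IsUlam (padZeros a' [true, false, true] b)) ∨
    (∃ b', b = b' + 1 ∧ u = padZeros a [true, false, true] b' ∧
      IsUlam (padZeros a [true, false, true] b')) ∨
    (u = padZeros a [true] 0 ∧ Even b ∧ ¬(a = 1 ∧ b = 0)) ∨
    (u = padZeros a [true] 1 ∧ Even a ∧ ¬(a = 0 ∧ b = 1)) := by
  rcases h.cases_padZeros with ⟨a', rfl, rfl, rfl⟩ | ⟨b', rfl, rfl, rfl⟩ | ⟨k, hk, hk', rfl, rfl⟩
  · exact Or.inl ⟨a', rfl, rfl, h.right⟩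
  · exact Or.inr (Or.inl ⟨b', rfl, rfl, h.left⟩)
  · simp only [length_cons, length_nil] at hk'
    interval_cases k
    · exact Or.inr (Or.inr (Or.inl ⟨rfl,
        (isUlamSplit_padZeros_true_false_true_cut_one_iff a b).1
          (h.of_append_eq (by simp [padZeros]))⟩))
    · have hu : padZeros a ([true, false, true].take 2) 0 = padZeros a [true] 1 := by
        simp [padZeros]
      rw [hu] at h ⊢
      exact Or.inr (Or.inr (Or.inr ⟨rfl,
        (isUlamSplit_padZeros_true_false_true_cut_two_iff a b).1
          (h.of_append_eq (by simp [padZeros]))⟩))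

theorem odd_and_three_le_of_isUlam_padZeros_true_false_true {a b : ℕ}
    (ih : ∀ a' b', a' + b' < a + b →
      (IsUlam (padZeros a' [true, false, true] b') ↔ Odd (a' + b') ∧ 3 ≤ a' + b'))
    (hw : IsUlam (padZeros a [true, false, true] b)) : Odd (a + b) ∧ 3 ≤ a + b := by
  have core₁ := isUlamSplit_padZeros_true_false_true_cut_one_iff a b
  have core₂ := isUlamSplit_padZeros_true_false_true_cut_two_iff a b
  obtain ⟨u, v, hs⟩ := hw.exists_split (by simp [length_padZeros]; omega)
  rcases hs.cases_padZeros_true_false_true with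
    ⟨a', rfl, rfl, h⟩ | ⟨b', rfl, rfl, h⟩ | ⟨rfl, hb, hab⟩ | ⟨rfl, ha, hab⟩
  · obtain ⟨hodd, h3⟩ := (ih a' b (by omega)).1 h
    rcases eq_or_ne b 0 with rfl | hb
    · have := hw.left_eq_of_split hs (core₁.2 ⟨Even.zero, by omega⟩)
      simp [padZeros, replicate_succ] at this
    · obtain ⟨b', rfl⟩ := Nat.exists_eq_add_one_of_ne_zero hb
      have := hw.left_eq_of_split hs ((isUlamSplit_padZeros_succ_right_iff (by simp)).2
        ((ih (a' + 1) b' (by omega)).2 ⟨by rwa [add_right_comm, add_assoc], by omega⟩))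
      simp [padZeros, replicate_succ] at this
  · obtain ⟨hodd, h3⟩ := (ih a b' (by omega)).1 h
    rcases eq_or_ne a 0 with rfl | ha
    · have := hw.left_eq_of_split (core₂.2 ⟨Even.zero, by omega⟩) hs
      simp [padZeros] at this
    · obtain ⟨a', rfl⟩ := Nat.exists_eq_add_one_of_ne_zero ha
      have := hw.left_eq_of_split ((isUlamSplit_padZeros_succ_left_iff (by simp)).2
        ((ih a' (b' + 1) (by omega)).2 ⟨by rwa [add_right_comm, add_assoc] at hodd, by omega⟩)) hs
      simp [padZeros, replicate_succ] at this
  · rcases Nat.even_or_odd a with ha | ha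
    · have := hw.left_eq_of_split hs (core₂.2 ⟨ha, by rintro ⟨-, rfl⟩; simp at hb⟩)
      simp [padZeros] at this
    · refine ⟨ha.add_even hb, ?_⟩
      simp only [Nat.odd_iff, Nat.even_iff] at ha hb
      omega
  · rcases Nat.even_or_odd b with hb | hb
    · have := hw.left_eq_of_split (core₁.2 ⟨hb, by rintro ⟨rfl, -⟩; simp at ha⟩) hs
      simp [padZeros] at this
    · refine ⟨ha.add_odd hb, ?_⟩
      simp only [Nat.odd_iff, Nat.even_iff] at ha hb
      omega

theorem isUlam_padZeros_true_false_true_of_odd {a b : ℕ}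
    (ih : ∀ a' b', a' + b' < a + b → IsUlam (padZeros a' [true, false, true] b') → Odd (a' + b'))
    (hodd : Odd (a + b)) (h3 : 3 ≤ a + b) : IsUlam (padZeros a [true, false, true] b) := by
  have hodd' := Nat.odd_iff.1 hodd
  have edge_odd : ∀ a' b', a' + b' + 1 = a + b →
      ¬IsUlam (padZeros a' [true, false, true] b') := fun a' b' hsum h => by
    have := Nat.odd_iff.1 (ih a' b' (by omega) h)
    omega
  rcases Nat.even_or_odd a with ha | ha
  · have ha' := Nat.even_iff.1 ha
    refine isUlam_of_unique_split
      ((isUlamSplit_padZeros_true_false_true_cut_two_iff a b).2 ⟨ha, by omega⟩) fun u v hs => ?_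
    rcases hs.cases_padZeros_true_false_true with
      ⟨a', rfl, -, h⟩ | ⟨b', rfl, -, h⟩ | ⟨-, h, -⟩ | ⟨hu, -⟩
    · exact absurd h (edge_odd a' b (by omega))
    · exact absurd h (edge_odd a b' (by omega))
    · have := Nat.even_iff.1 h; omega
    · exact hu
  · have ha' := Nat.odd_iff.1 ha
    refine isUlam_of_unique_split ((isUlamSplit_padZeros_true_false_true_cut_one_iff a b).2
      ⟨by rw [Nat.even_iff]; omega, by omega⟩) fun u v hs => ?_
    rcases hs.cases_padZeros_true_false_true with
      ⟨a', rfl, -, h⟩ | ⟨b', rfl, -, h⟩ | ⟨hu, -⟩ | ⟨-, h, -⟩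
    · exact absurd h (edge_odd a' b (by omega))
    · exact absurd h (edge_odd a b' (by omega))
    · exact hu
    · have := Nat.even_iff.1 h; omega

theorem isUlam_padZeros_true_false_true_iff (a b : ℕ) :
    IsUlam (padZeros a [true, false, true] b) ↔ Odd (a + b) ∧ 3 ≤ a + b := by
  induction hs : a + b using Nat.strong_induction_on generalizing a b with
  | _ s ih =>
  subst hs
  have ih' a' b' (h : a' + b' < a + b) := ih _ h a' b' rfl
  exact ⟨odd_and_three_le_of_isUlam_padZeros_true_false_true ih', fun ⟨hodd, h3⟩ =>
    isUlam_padZeros_true_false_true_of_odd (fun a' b' h hw => ((ih' a' b' h).1 hw).1) hodd h3⟩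

theorem not_isUlam_true_false_false_true : ¬IsUlam [true, false, false, true] := by
  intro hw
  have h₁ : IsUlamSplit [true, false, false, true] [true] [false, false, true] :=
    ⟨isUlam_singleton true, isUlam_padZeros_true_zero 2, by simp, rfl⟩
  have h₂ : IsUlamSplit [true, false, false, true] [true, false] [false, true] :=
    ⟨isUlam_zero_padZeros_true 1, isUlam_padZeros_true_zero 1, by simp, rfl⟩
  simpa using hw.left_eq_of_split h₁ h₂

theorem not_isUlam_padZeros_true_true_false_false_true_of_odd {b : ℕ} (hb : Odd b) :
    ¬IsUlam (padZeros b [true, true, false, false, true] 0) := by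
  intro hw
  have h₁ : IsUlamSplit (padZeros b [true, true, false, false, true] 0)
      (padZeros b [true, true] 0) [false, false, true] :=
    ⟨(isUlam_padZeros_true_true_iff b 0).2 hb, isUlam_padZeros_true_zero 2,
      fun h => by simpa [padZeros] using congrArg (count true) h, by simp [padZeros]⟩
  have h₂ : IsUlamSplit (padZeros b [true, true, false, false, true] 0)
      (padZeros b [true, true] 2) [true] :=
    ⟨(isUlam_padZeros_true_true_iff b 2).2 (by simpa [parity_simps] using hb),
      isUlam_singleton true, fun h => by simpa [padZeros] using congrArg length h,
      by simp [padZeros]⟩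
  simpa [padZeros] using congrArg length (hw.left_eq_of_split h₁ h₂)

theorem isUlam_padZeros_true_true_false_false_true_of_even {b : ℕ} (hb : Even b) :
    IsUlam (padZeros b [true, true, false, false, true] 0) := by
  have h : IsUlamSplit (padZeros b [true, true, false, false, true] 0)
      (padZeros b [true, true] 1) [false, true] :=
    ⟨(isUlam_padZeros_true_true_iff b 1).2 hb.add_one, isUlam_padZeros_true_zero 1,
      fun h => by simpa [padZeros] using congrArg length h, by simp [padZeros]⟩
  refine isUlam_of_unique_split h fun u v hs => ?_
  rcases hs.cases_padZeros with ⟨b', rfl, -, rfl⟩ | ⟨_, h, -⟩ | ⟨k, hk, hk', rfl, rfl⟩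
  · exact absurd hs.right (not_isUlam_padZeros_true_true_false_false_true_of_odd
      (by simpa [parity_simps] using hb))
  · omega
  · simp only [length_cons, length_nil] at hk'
    interval_cases k
    · exact absurd hs.right not_isUlam_true_false_false_true
    · exact absurd ((isUlam_padZeros_true_true_iff b 0).1 hs.left) (by simpa using hb)
    · simp [padZeros]
    · have : IsUlam (padZeros b [true, true] 2) := by simpa [padZeros] using hs.left
      exact absurd ((isUlam_padZeros_true_true_iff b 2).1 this) (by simpa [parity_simps] using hb)

theorem count_true_map_not (w : List Bool) : (w.map not).count true = w.count false :=
  count_map_of_injective w not Bool.not_injective false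

theorem count_true_padZeros (a b : ℕ) (c : List Bool) :
    (padZeros a c b).count true = c.count true := by
  simp [padZeros, count_replicate]

theorem padZeros_left_injective (c : List Bool) (m : ℕ) :
    Function.Injective fun a => padZeros a (true :: c) (m - a) := fun a a' h => by
  simpa only [idxOf_true_padZeros] using congrArg (idxOf true) h

theorem disjoint_of_count_true_ne {A B : Finset (List Bool)} {i j : ℕ} (hij : i ≠ j)
    (hA : ∀ w ∈ A, w.count true = i) (hB : ∀ w ∈ B, w.count true = j) : Disjoint A B :=
  Finset.disjoint_left.2 fun w hwA hwB => hij ((hA w hwA).symm.trans (hB w hwB))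

theorem two_mul_card_le_ncard_isUlam {n : ℕ} (S : Finset (List Bool))
    (hS : ∀ w ∈ S, w.length = n ∧ IsUlam w ∧ 2 * w.count true < n) :
    2 * S.card ≤ {w : List Bool | w.length = n ∧ IsUlam w}.ncard := by
  have hdisj : Disjoint S (S.image (map not)) := by
    refine Finset.disjoint_left.2 fun w hw hw' => ?_
    obtain ⟨v, hv, rfl⟩ := Finset.mem_image.1 hw'
    have := (hS _ hw).2.2
    have := hS v hv
    have := count_true_add_count_false v
    rw [count_true_map_not] at *
    omega
  have hsub : ↑(S ∪ S.image (map not)) ⊆ {w : List Bool | w.length = n ∧ IsUlam w} := by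
    intro w hw
    rcases Finset.mem_union.1 hw with hw | hw
    · exact ⟨(hS w hw).1, (hS w hw).2.1⟩
    · obtain ⟨v, hv, rfl⟩ := Finset.mem_image.1 hw
      exact ⟨by simpa using (hS v hv).1, (hS v hv).2.1.map_not⟩
  calc 2 * S.card = (S ∪ S.image (map not)).card := by
        rw [Finset.card_union_of_disjoint hdisj,
          Finset.card_image_of_injective _ (map_injective_iff.2 Bool.not_injective)]
        ring
    _ = (↑(S ∪ S.image (map not)) : Set (List Bool)).ncard := (Set.ncard_coe_finset _).symm
    _ ≤ _ := Set.ncard_le_ncard hsub ((List.finite_length_eq Bool n).subset fun w hw => hw.1)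

theorem exists_finset_isUlam_of_even {n : ℕ} (hn : 6 ≤ n) (he : Even n) :
    ∃ S : Finset (List Bool), n + 2 ≤ S.card ∧
      ∀ w ∈ S, w.length = n ∧ IsUlam w ∧ 2 * w.count true < n := by
  have hodd : Odd (n - 1) := Nat.Even.sub_odd (by omega) he odd_one
  set A := ({0, 1, n - 2, n - 1} : Finset ℕ).image fun a => padZeros a [true] (n - 1 - a)
  set B := (Finset.range (n - 2)).image fun a => padZeros a [true, false, true] (n - 3 - a)
  have hA : ∀ w ∈ A, w.length = n ∧ IsUlam w ∧ w.count true = 1 := by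
    simp only [A, Finset.mem_image]
    rintro w ⟨a, ha, rfl⟩
    refine ⟨by simp at ha; simp [length_padZeros]; omega, ?_, by simp [count_true_padZeros]⟩
    rw [isUlam_padZeros_true_iff]
    simp only [Finset.mem_insert, Finset.mem_singleton] at ha
    rcases ha with rfl | rfl | rfl | rfl
    · simp
    · rwa [show 1 + (n - 1 - 1) = n - 1 by omega, Nat.choose_one_right]
    · rwa [show n - 2 + (n - 1 - (n - 2)) = n - 2 + 1 by omega, Nat.choose_succ_self_right,
        show n - 2 + 1 = n - 1 by omega]
    · simp
  have hB : ∀ w ∈ B, w.length = n ∧ IsUlam w ∧ w.count true = 2 := by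
    simp only [B, Finset.mem_image, Finset.mem_range]
    rintro w ⟨a, ha, rfl⟩
    refine ⟨by simp [length_padZeros]; omega, ?_, by simp [count_true_padZeros]⟩
    refine (isUlam_padZeros_true_false_true_iff a (n - 3 - a)).2 ⟨?_, by omega⟩
    rw [show a + (n - 3 - a) = n - 1 - 2 by omega]
    exact Nat.Odd.sub_even (by omega) hodd even_two
  refine ⟨A ∪ B, ?_, ?_⟩
  · rw [Finset.card_union_of_disjoint (disjoint_of_count_true_ne (by decide)
        (fun w hw => (hA w hw).2.2) (fun w hw => (hB w hw).2.2)),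
      Finset.card_image_of_injective _ (padZeros_left_injective [] (n - 1)),
      Finset.card_image_of_injective _ (padZeros_left_injective [false, true] (n - 3)),
      Finset.card_range, Finset.card_insert_of_notMem (by simp; omega),
      Finset.card_insert_of_notMem (by simp; omega), Finset.card_pair (by omega)]
    omega
  · intro w hw
    rcases Finset.mem_union.1 hw with hw | hw
    · exact ⟨(hA w hw).1, (hA w hw).2.1, by rw [(hA w hw).2.2]; omega⟩
    · exact ⟨(hB w hw).1, (hB w hw).2.1, by rw [(hB w hw).2.2]; omega⟩

theorem exists_finset_isUlam_of_odd {n : ℕ} (hn : 6 ≤ n) (ho : Odd n) :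
    ∃ S : Finset (List Bool), n + 2 ≤ S.card ∧
      ∀ w ∈ S, w.length = n ∧ IsUlam w ∧ 2 * w.count true < n := by
  have hn7 : 7 ≤ n := by obtain ⟨k, rfl⟩ := ho; omega
  set A := ({0, n - 1} : Finset ℕ).image fun a => padZeros a [true] (n - 1 - a)
  set F := (Finset.range (n - 1)).image fun a => padZeros a [true, true] (n - 2 - a)
  set M : Finset (List Bool) := {padZeros (n - 5) [true, true, false, false, true] 0}
  have hA : ∀ w ∈ A, w.length = n ∧ IsUlam w ∧ w.count true = 1 := by
    simp only [A, Finset.mem_image, Finset.mem_insert, Finset.mem_singleton]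
    rintro w ⟨a, ha, rfl⟩
    refine ⟨by simp [length_padZeros]; omega, ?_, by simp [count_true_padZeros]⟩
    rcases ha with rfl | rfl
    · exact isUlam_zero_padZeros_true _
    · rw [Nat.sub_self]
      exact isUlam_padZeros_true_zero _
  have hF : ∀ w ∈ F, w.length = n ∧ IsUlam w ∧ w.count true = 2 := by
    simp only [F, Finset.mem_image, Finset.mem_range]
    rintro w ⟨a, ha, rfl⟩
    refine ⟨by simp [length_padZeros]; omega, ?_, by simp [count_true_padZeros]⟩
    rw [isUlam_padZeros_true_true_iff, show a + (n - 2 - a) = n - 2 by omega]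
    exact Nat.Odd.sub_even (by omega) ho even_two
  have hM : ∀ w ∈ M, w.length = n ∧ IsUlam w ∧ w.count true = 3 := by
    simp only [M, Finset.mem_singleton]
    rintro w rfl
    refine ⟨by simp [length_padZeros]; omega, ?_, by simp [count_true_padZeros]⟩
    exact isUlam_padZeros_true_true_false_false_true_of_even
      (by simpa using Nat.Odd.sub_odd ho (odd_two_mul_add_one 2))
  refine ⟨A ∪ F ∪ M, ?_, ?_⟩
  · have hA' w (hw : w ∈ A) := (hA w hw).2.2
    have hF' w (hw : w ∈ F) := (hF w hw).2.2
    have hM' w (hw : w ∈ M) := (hM w hw).2.2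
    have hAF : Disjoint A F := disjoint_of_count_true_ne (by decide) hA' hF'
    have hAFM : Disjoint (A ∪ F) M := Finset.disjoint_union_left.2
      ⟨disjoint_of_count_true_ne (by decide) hA' hM', disjoint_of_count_true_ne (by decide) hF' hM'⟩
    rw [Finset.card_union_of_disjoint hAFM, Finset.card_union_of_disjoint hAF,
      Finset.card_image_of_injective _ (padZeros_left_injective [] (n - 1)),
      Finset.card_image_of_injective _ (padZeros_left_injective [true] (n - 2)),
      Finset.card_range, Finset.card_pair (by omega), Finset.card_singleton]
    omega
  · intro w hw
    rcases Finset.mem_union.1 hw with hw | hw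
    · rcases Finset.mem_union.1 hw with hw | hw
      · exact ⟨(hA w hw).1, (hA w hw).2.1, by rw [(hA w hw).2.2]; omega⟩
      · exact ⟨(hF w hw).1, (hF w hw).2.1, by rw [(hF w hw).2.2]; omega⟩
    · exact ⟨(hM w hw).1, (hM w hw).2.1, by rw [(hM w hw).2.2]; omega⟩

theorem ulam_linear_lower_bound (n : ℕ) (hn : 6 ≤ n) :
    2 * n + 4 ≤ {w : List Bool | w.length = n ∧ IsUlam w}.ncard := by
  obtain ⟨S, hcard, hS⟩ :=
    (Nat.even_or_odd n).elim (exists_finset_isUlam_of_even hn) (exists_finset_isUlam_of_odd hn)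
  calc 2 * n + 4 ≤ 2 * S.card := by omega
    _ ≤ _ := two_mul_card_le_ncard_isUlam S hS
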